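/- Let E₀, E₁ be 4×4 complex matrices with E₀* E₀ + E₁* E₁ = I₄, and let E be the channel on M_4 given by E(X) = E₀ X E₀* + E₁ X E₁*. Then E is probabilistically correctable for ℂ²: there exist a subchannel S from M_2 to M_4, a subchannel R from M_4 to M_2, and a real p > 0 such that R(E(S(X))) = p·X for all X ∈ M_2. -/

import Mathlib

/-!
It suffices to find matrices `A : 2 × 4` and `V : 4 × 2` with `A Eₖ V = cₖ I` for some
`(c₀, c₁) ≠ 0`: once `A` and `V` are scaled to contractions, `S X = V X Vᴴ` and `R Y = A Y Aᴴ`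
give `R (E (S X)) = (|c₀|² + |c₁|²) X`. Equivalently, we need vectors `v₁, v₂` and a linear map
`α` to `K²` with `α (Eₖ vⱼ) = cₖ eⱼ`, and these exist for any two operators without common kernel
(such as the Kraus operators of a channel) on a space of dimension at least four over an
algebraically closed field. If a nonzero member `b E₀ - a E₁` of the pencil has a two-dimensional
kernel, take `v₁, v₂` in it. Otherwise take `v₁` in the kernel of a singular member, so that
`E₀ v₁ = a u` and `E₁ v₁ = b u`, and look for `v₂` with `u, E₀ v₂, E₁ v₂` independent. If there is
none, `E₀` and `E₁` are locally linearly dependent modulo `u`, so some nonzero combination of them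
has rank at most one modulo `u`, hence rank at most two, and its kernel is two-dimensional after
all.
-/

open Matrix Kronecker BigOperators
open scoped ComplexOrder

noncomputable section

/-- `Mat n` is the space of `n × n` complex matrices. -/
abbrev Mat (n : ℕ) := Matrix (Fin n) (Fin n) ℂ

/-- A subchannel from `M_n` to `M_m`: a map of Kraus form whose Kraus operators satisfy
`∑ Kᴴ K ≤ 1` in the Loewner order. -/
def IsSubchannel {n m : Type} [Fintype n] [DecidableEq n] [Fintype m]
    (Φ : Matrix n n ℂ → Matrix m m ℂ) : Prop :=
  ∃ (k : ℕ) (K : Fin k → Matrix m n ℂ),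
    (∀ X, Φ X = ∑ i, K i * X * (K i)ᴴ) ∧ (1 - ∑ i, (K i)ᴴ * K i).PosSemidef

/-- A channel from `M_n` to `M_m`: a map of Kraus form with `∑ Kᴴ K = 1`. -/
def IsChannel {n m : Type} [Fintype n] [DecidableEq n] [Fintype m]
    (Φ : Matrix n n ℂ → Matrix m m ℂ) : Prop :=
  ∃ (k : ℕ) (K : Fin k → Matrix m n ℂ),
    (∀ X, Φ X = ∑ i, K i * X * (K i)ᴴ) ∧ (∑ i, (K i)ᴴ * K i) = 1

/-- `E` is probabilistically correctable for `ℂ^d`. -/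
def ProbCorrectable (d : ℕ) {s : ℕ} (E : Mat s → Mat s) : Prop :=
  ∃ (S : Mat d → Mat s) (R : Mat s → Mat d) (p : ℝ),
    IsSubchannel S ∧ IsSubchannel R ∧ 0 < p ∧ ∀ X, R (E (S X)) = (p : ℂ) • X

/-- `E` is perfectly correctable for `ℂ^d`. -/
def PerfCorrectable (d : ℕ) {s : ℕ} (E : Mat s → Mat s) : Prop :=
  ∃ (S : Mat d → Mat s) (R : Mat s → Mat d),
    IsSubchannel S ∧ IsSubchannel R ∧ ∀ X, R (E (S X)) = X

/-- The Choi matrix of a map on `M_s`. -/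
def choi {s : ℕ} (Φ : Mat s → Mat s) : Matrix (Fin s × Fin s) (Fin s × Fin s) ℂ :=
  ∑ i : Fin s, ∑ j : Fin s, (Φ (Matrix.single i j 1)) ⊗ₖ (Matrix.single i j 1)

/-- `rP d s`: the largest `r` such that every channel on `M_s` with Choi rank at most `r`
is probabilistically correctable for `ℂ^d`. -/
def rP (d s : ℕ) : ℕ :=
  sSup {r : ℕ | ∀ E : Mat s → Mat s, IsChannel E → (choi E).rank ≤ r → ProbCorrectable d E}

/-- `rP1 d s`: the largest `r` such that every channel on `M_s` with Choi rank at most `r`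
is perfectly correctable for `ℂ^d`. -/
def rP1 (d s : ℕ) : ℕ :=
  sSup {r : ℕ | ∀ E : Mat s → Mat s, IsChannel E → (choi E).rank ≤ r → PerfCorrectable d E}

open Module LinearMap Submodule

section LinearAlgebra

variable {K V W : Type*} [Field K] [AddCommGroup V] [Module K V] [AddCommGroup W] [Module K W]

theorem LinearIndependent.exists_linearMap_apply_eq {ι : Type*} [Fintype ι] {u : ι → V}
    (hu : LinearIndependent K u) (y : ι → W) : ∃ g : V →ₗ[K] W, ∀ i, g (u i) = y i := by
  classical
  obtain ⟨g, hg⟩ := (Fintype.linearCombination K u).exists_leftInverse_of_injective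
    (LinearMap.ker_eq_bot.2 hu.fintypeLinearCombination_injective)
  refine ⟨Fintype.linearCombination K y ∘ₗ g, fun i => ?_⟩
  have : g (u i) = Pi.single i 1 := by simpa using congr($hg (Pi.single i 1))
  simp [this]

theorem LinearMap.finrank_le_finrank_ker_add_two [FiniteDimensional K V] (P : V →ₗ[K] W)
    {w₁ w₂ : W} (h : range P ≤ span K {w₁, w₂}) : finrank K V ≤ finrank K (ker P) + 2 := by
  classical
  have := FiniteDimensional.span_of_finite K (Set.toFinite {w₁, w₂})
  have hspan : finrank K (span K {w₁, w₂}) ≤ 2 := by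
    have := (finrank_span_finset_le_card (R := K) ({w₁, w₂} : Finset W)).trans Finset.card_le_two
    rwa [Finset.coe_insert, Finset.coe_singleton] at this
  have := P.finrank_range_add_finrank_ker
  have := Submodule.finrank_mono h
  omega

theorem exists_eq_smul_of_smul_sub_smul_eq_zero {a b : K} (hab : a ≠ 0 ∨ b ≠ 0) {x y : W}
    (h : b • x - a • y = 0) : ∃ u, x = a • u ∧ y = b • u := by
  rw [sub_eq_zero] at h
  rcases hab with ha | hb
  · refine ⟨a⁻¹ • x, by rw [smul_inv_smul₀ ha], ?_⟩
    rw [smul_comm, h, inv_smul_smul₀ ha]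
  · refine ⟨b⁻¹ • y, ?_, by rw [smul_inv_smul₀ hb]⟩
    rw [smul_comm, ← h, inv_smul_smul₀ hb]

theorem mem_span_singleton_of_not_linearIndependent {x y : W} (hx : x ≠ 0)
    (h : ¬ LinearIndependent K ![x, y]) : y ∈ K ∙ x := by
  rw [LinearIndependent.pair_iff' hx] at h
  push Not at h
  exact mem_span_singleton.2 h

theorem not_linearIndependent_of_mem_span_singleton {x y w : W} (hx : x ∈ K ∙ w)
    (hy : y ∈ K ∙ w) : ¬ LinearIndependent K ![x, y] := by
  obtain ⟨s, rfl⟩ := mem_span_singleton.1 hx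
  obtain ⟨t, rfl⟩ := mem_span_singleton.1 hy
  intro h
  obtain ⟨rfl, -⟩ := LinearIndependent.pair_iff.1 h t (-s) (by
    rw [smul_smul, smul_smul, mul_comm, neg_mul, neg_smul, add_neg_cancel])
  exact h.ne_zero 1 (by simp)

theorem linearIndependent_of_linearIndependent_mkQ {u x y : W} (hu : u ≠ 0)
    (h : LinearIndependent K ![(K ∙ u).mkQ x, (K ∙ u).mkQ y]) :
    LinearIndependent K ![u, x, y] := by
  rw [Fintype.linearIndependent_iff]
  intro g hg
  rw [Fin.sum_univ_three] at hg
  simp only [Matrix.cons_val_zero, Matrix.cons_val_one, Matrix.cons_val_two, Matrix.head_cons,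
    Matrix.tail_cons] at hg
  obtain ⟨h₁, h₂⟩ := LinearIndependent.pair_iff.1 h (g 1) (g 2) (by
    rw [← map_smul, ← map_smul, ← map_add, mkQ_apply, Quotient.mk_eq_zero,
      eq_neg_of_add_eq_zero_right ((add_assoc _ _ _).symm.trans hg)]
    exact neg_mem (smul_mem _ _ (mem_span_singleton_self u)))
  have h₀ : g 0 = 0 := by simpa [h₁, h₂, hu] using hg
  intro i
  fin_cases i <;> assumption

section LocallyDependent

variable {B D : V →ₗ[K] W} (h : ∀ v, ¬ LinearIndependent K ![B v, D v])
include h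

theorem LinearMap.apply_mem_span_singleton_of_forall_not_linearIndependent {v : V}
    (hv : D v ≠ 0) : B v ∈ K ∙ D v :=
  mem_span_singleton_of_not_linearIndependent hv (LinearIndependent.pair_symm_iff.not.1 (h v))

theorem LinearMap.apply_mem_span_singleton_of_apply_eq_zero {v z : V} (hv : D v ≠ 0)
    (hz : D z = 0) : B z ∈ K ∙ D v := by
  have hvz : D (v + z) = D v := by rw [map_add, hz, add_zero]
  have := apply_mem_span_singleton_of_forall_not_linearIndependent h (v := v + z) (hvz ▸ hv)
  rw [hvz, map_add] at this
  simpa using sub_mem this (apply_mem_span_singleton_of_forall_not_linearIndependent h hv)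

theorem LinearMap.eq_zero_of_forall_not_linearIndependent {x y : V}
    (hxy : LinearIndependent K ![B x, B y]) (hx : D x = 0) : D = 0 := by
  have hy : D y = 0 := by
    by_contra hy
    exact not_linearIndependent_of_mem_span_singleton
      (apply_mem_span_singleton_of_apply_eq_zero h hy hx)
      (apply_mem_span_singleton_of_forall_not_linearIndependent h hy) hxy
  ext v
  by_contra hv
  exact not_linearIndependent_of_mem_span_singleton
    (apply_mem_span_singleton_of_apply_eq_zero h hv hx)
    (apply_mem_span_singleton_of_apply_eq_zero h hv hy) hxy

end LocallyDependent

theorem LinearMap.exists_range_le_span_singleton_of_forall_not_linearIndependent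
    (B₀ B₁ : V →ₗ[K] W) (h : ∀ v, ¬ LinearIndependent K ![B₀ v, B₁ v]) :
    ∃ β γ : K, (β ≠ 0 ∨ γ ≠ 0) ∧ ∃ w, range (β • B₀ + γ • B₁) ≤ K ∙ w := by
  by_cases hB : ∃ x y, LinearIndependent K ![B₀ x, B₀ y]
  · obtain ⟨x, y, hxy⟩ := hB
    obtain ⟨c, hc⟩ : ∃ c : K, c • B₀ x = B₁ x := mem_span_singleton.1
      (mem_span_singleton_of_not_linearIndependent (hxy.ne_zero 0) (h x))
    have hD : (-c) • B₀ + B₁ = 0 := by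
      refine eq_zero_of_forall_not_linearIndependent (fun v => ?_) hxy ?_
      · rw [LinearMap.add_apply, LinearMap.smul_apply, LinearIndependent.pair_add_smul_right_iff]
        exact h v
      · rw [LinearMap.add_apply, LinearMap.smul_apply, ← hc, neg_smul, neg_add_cancel]
    exact ⟨-c, 1, Or.inr one_ne_zero, 0, by rw [one_smul, hD, range_zero]; exact bot_le⟩
  · push Not at hB
    refine ⟨1, 0, Or.inl one_ne_zero, ?_⟩
    by_cases hB₀ : ∃ x, B₀ x ≠ 0
    · obtain ⟨x, hx⟩ := hB₀
      exact ⟨B₀ x, by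
        rintro _ ⟨v, rfl⟩
        simpa using mem_span_singleton_of_not_linearIndependent hx (hB x v)⟩
    · push Not at hB₀
      exact ⟨0, by rintro _ ⟨v, rfl⟩; simp [hB₀]⟩

def CompressesToScalars (T₀ T₁ : V →ₗ[K] W) : Prop :=
  ∃ (ν : (Fin 2 → K) →ₗ[K] V) (α : W →ₗ[K] Fin 2 → K) (a b : K), (a ≠ 0 ∨ b ≠ 0) ∧
    α ∘ₗ T₀ ∘ₗ ν = a • LinearMap.id ∧ α ∘ₗ T₁ ∘ₗ ν = b • LinearMap.id

theorem compressesToScalars_of_apply {T₀ T₁ : V →ₗ[K] W} (v : Fin 2 → V)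
    (α : W →ₗ[K] Fin 2 → K) {a b : K} (hab : a ≠ 0 ∨ b ≠ 0)
    (h₀ : ∀ j, α (T₀ (v j)) = a • Pi.single j 1) (h₁ : ∀ j, α (T₁ (v j)) = b • Pi.single j 1) :
    CompressesToScalars T₀ T₁ := by
  refine ⟨Fintype.linearCombination K v, α, a, b, hab, ?_, ?_⟩ <;> ext j i <;> simp [h₀, h₁]

theorem compressesToScalars_of_linearIndependent_ker {T₀ T₁ : V →ₗ[K] W}
    (hker : ker T₀ ⊓ ker T₁ = ⊥) {a b : K} (hab : a ≠ 0 ∨ b ≠ 0) {w : Fin 2 → V}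
    (hw : LinearIndependent K w) (hwker : ∀ j, w j ∈ ker (b • T₀ - a • T₁)) :
    CompressesToScalars T₀ T₁ := by
  choose u hu₀ hu₁ using fun j => exists_eq_smul_of_smul_sub_smul_eq_zero hab (hwker j)
  have hu : LinearIndependent K u := by
    have hcomp : ((a • LinearMap.id).prod (b • LinearMap.id) : W →ₗ[K] W × W) ∘ u =
        T₀.prod T₁ ∘ w := by
      funext j
      simp [hu₀, hu₁]
    exact .of_comp _ (hcomp ▸ hw.map' _ (by rw [ker_prod, hker]))
  obtain ⟨α, hα⟩ := hu.exists_linearMap_apply_eq fun j => (Pi.single j 1 : Fin 2 → K)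
  exact compressesToScalars_of_apply w α hab (by simp [hu₀, hα]) (by simp [hu₁, hα])

theorem compressesToScalars_of_linearIndependent_triple {T₀ T₁ : V →ₗ[K] W} {a b : K}
    (hab : a ≠ 0 ∨ b ≠ 0) {v₁ v₂ : V} {u : W} (h₀ : T₀ v₁ = a • u) (h₁ : T₁ v₁ = b • u)
    (hli : LinearIndependent K ![u, T₀ v₂, T₁ v₂]) : CompressesToScalars T₀ T₁ := by
  obtain ⟨α, hα⟩ := hli.exists_linearMap_apply_eq
    ![(Pi.single 0 1 : Fin 2 → K), a • Pi.single 1 1, b • Pi.single 1 1]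
  have hα₀ := hα 0
  have hα₁ := hα 1
  have hα₂ := hα 2
  simp only [Matrix.cons_val_zero, Matrix.cons_val_one, Matrix.cons_val_two, Matrix.head_cons,
    Matrix.tail_cons] at hα₀ hα₁ hα₂
  refine compressesToScalars_of_apply ![v₁, v₂] α hab ?_ ?_ <;> intro j <;> fin_cases j <;>
    simp [h₀, h₁, hα₀, hα₁, hα₂]

theorem exists_two_le_finrank_ker_of_forall_not_linearIndependent [FiniteDimensional K V]
    (hV : 4 ≤ finrank K V) {T₀ T₁ : V →ₗ[K] W} (u : W)
    (h : ∀ v, ¬ LinearIndependent K ![(K ∙ u).mkQ (T₀ v), (K ∙ u).mkQ (T₁ v)]) :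
    ∃ a b : K, (a ≠ 0 ∨ b ≠ 0) ∧ 2 ≤ finrank K (ker (b • T₀ - a • T₁)) := by
  obtain ⟨β, γ, hβγ, w, hw⟩ := exists_range_le_span_singleton_of_forall_not_linearIndependent
    ((K ∙ u).mkQ ∘ₗ T₀) ((K ∙ u).mkQ ∘ₗ T₁) h
  obtain ⟨w, rfl⟩ := (K ∙ u).mkQ_surjective w
  have hrange : range (β • T₀ - (-γ) • T₁) ≤ span K {u, w} := by
    rintro _ ⟨v, rfl⟩
    obtain ⟨c, hc⟩ := mem_span_singleton.1 (hw ⟨v, rfl⟩)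
    have : (β • T₀ - (-γ) • T₁) v - c • w ∈ K ∙ u := by
      rw [← Quotient.mk_eq_zero, ← mkQ_apply, map_sub, map_smul, hc]
      simp
    obtain ⟨d, hd⟩ := mem_span_singleton.1 this
    exact mem_span_pair.2 ⟨d, c, by rw [hd, sub_add_cancel]⟩
  refine ⟨-γ, β, hβγ.symm.imp neg_ne_zero.2 id, ?_⟩
  have := finrank_le_finrank_ker_add_two _ hrange
  omega

theorem Module.End.exists_smul_sub_smul_apply_eq_zero [IsAlgClosed K] [FiniteDimensional K V]
    [Nontrivial V] (T₀ T₁ : Module.End K V) :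
    ∃ a b : K, (a ≠ 0 ∨ b ≠ 0) ∧ ∃ v ≠ 0, (b • T₀ - a • T₁) v = 0 := by
  by_cases h₀ : ker T₀ = ⊥
  · let e := LinearEquiv.ofInjectiveEndo T₀ (ker_eq_bot.1 h₀)
    obtain ⟨μ, hμ⟩ := Module.End.exists_eigenvalue (e.symm.toLinearMap ∘ₗ T₁)
    obtain ⟨v, hv⟩ := hμ.exists_hasEigenvector
    refine ⟨1, μ, Or.inl one_ne_zero, v, hv.2, ?_⟩
    have : T₁ v = μ • T₀ v := by simpa [e] using congr(e $(hv.apply_eq_smul))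
    simp [this]
  · obtain ⟨v, hv, hv0⟩ := (Submodule.ne_bot_iff _).1 h₀
    exact ⟨0, 1, Or.inr one_ne_zero, v, hv0, by simpa using hv⟩

theorem Module.End.compressesToScalars [IsAlgClosed K] [FiniteDimensional K V]
    (hV : 4 ≤ finrank K V) {T₀ T₁ : Module.End K V} (hker : ker T₀ ⊓ ker T₁ = ⊥) :
    CompressesToScalars T₀ T₁ := by
  by_cases hI : ∃ a b : K, (a ≠ 0 ∨ b ≠ 0) ∧ 2 ≤ finrank K (ker (b • T₀ - a • T₁))
  · obtain ⟨a, b, hab, hk⟩ := hI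
    obtain ⟨w, hw⟩ := exists_linearIndependent_of_le_finrank hk
    exact compressesToScalars_of_linearIndependent_ker hker hab (hw.map' _ (ker_subtype _))
      fun j => (w j).2
  have : Nontrivial V := Module.nontrivial_of_finrank_pos (R := K) (by omega)
  obtain ⟨a, b, hab, v₁, hv₁, hv₁ker⟩ := exists_smul_sub_smul_apply_eq_zero T₀ T₁
  obtain ⟨u, hu₀, hu₁⟩ := exists_eq_smul_of_smul_sub_smul_eq_zero hab hv₁ker
  have hu : u ≠ 0 := by
    rintro rfl
    exact hv₁ ((Submodule.eq_bot_iff _).1 hker v₁ ⟨by simpa using hu₀, by simpa using hu₁⟩)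
  by_cases hII : ∃ v₂, LinearIndependent K ![(K ∙ u).mkQ (T₀ v₂), (K ∙ u).mkQ (T₁ v₂)]
  · obtain ⟨v₂, hv₂⟩ := hII
    exact compressesToScalars_of_linearIndependent_triple hab hu₀ hu₁
      (linearIndependent_of_linearIndependent_mkQ hu hv₂)
  · push Not at hII
    exact absurd (exists_two_le_finrank_ker_of_forall_not_linearIndependent hV u hII) hI

end LinearAlgebra

theorem Matrix.ker_toLin'_inf_ker_toLin'_eq_bot {R n : Type*} [CommRing R] [StarRing R]
    [Fintype n] [DecidableEq n] {E₀ E₁ : Matrix n n R} (h : E₀ᴴ * E₀ + E₁ᴴ * E₁ = 1) :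
    ker (toLin' E₀) ⊓ ker (toLin' E₁) = ⊥ := by
  rw [Submodule.eq_bot_iff]
  intro v hv
  rw [mem_inf, mem_ker, mem_ker, toLin'_apply, toLin'_apply] at hv
  obtain ⟨h₀, h₁⟩ := hv
  rw [← one_mulVec v, ← h, add_mulVec, ← mulVec_mulVec, ← mulVec_mulVec, h₀, h₁]
  simp

theorem Matrix.exists_mul_mul_eq_smul_one {K n : Type*} [Field K] [IsAlgClosed K] [Fintype n]
    [DecidableEq n] (hn : 4 ≤ Fintype.card n) {E₀ E₁ : Matrix n n K}
    (hker : ker (toLin' E₀) ⊓ ker (toLin' E₁) = ⊥) :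
    ∃ (A : Matrix (Fin 2) n K) (V : Matrix n (Fin 2) K) (a b : K), (a ≠ 0 ∨ b ≠ 0) ∧
      A * E₀ * V = a • 1 ∧ A * E₁ * V = b • 1 := by
  obtain ⟨ν, α, a, b, hab, h₀, h₁⟩ := Module.End.compressesToScalars (by simpa using hn) hker
  refine ⟨toMatrix' α, toMatrix' ν, a, b, hab, ?_, ?_⟩
  · rw [← toMatrix'_toLin' E₀, ← toMatrix'_comp, ← toMatrix'_comp, comp_assoc, h₀, map_smul,
      toMatrix'_id]
  · rw [← toMatrix'_toLin' E₁, ← toMatrix'_comp, ← toMatrix'_comp, comp_assoc, h₁, map_smul,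
      toMatrix'_id]

open scoped MatrixOrder Matrix.Norms.L2Operator in
theorem Matrix.exists_pos_smul_contraction {m n : Type*} [Fintype m] [Fintype n] [DecidableEq n]
    (M : Matrix m n ℂ) : ∃ t : ℝ, 0 < t ∧ (1 - ((t : ℂ) • M)ᴴ * ((t : ℂ) • M)).PosSemidef := by
  set N := ‖Mᴴ * M‖
  have hM : ((N : ℂ) • 1 - Mᴴ * M).PosSemidef := by
    have := IsSelfAdjoint.le_algebraMap_norm_self (isHermitian_conjTranspose_mul_self M)
    rwa [Algebra.algebraMap_eq_smul_one, ← Complex.coe_smul] at this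
  have hN : 0 ≤ N := norm_nonneg _
  set t := (N + 1)⁻¹
  have ht : 0 < t := by positivity
  refine ⟨t, ht, ?_⟩
  have key : 1 - ((t : ℂ) • M)ᴴ * ((t : ℂ) • M) = ((1 - t ^ 2 * N : ℝ) : ℂ) • (1 : Matrix n n ℂ)
      + ((t ^ 2 : ℝ) : ℂ) • ((N : ℂ) • 1 - Mᴴ * M) := by
    simp only [conjTranspose_smul, Complex.star_def, Complex.conj_ofReal, Matrix.smul_mul,
      Matrix.mul_smul]
    push_cast
    module
  rw [key]
  refine .add (.smul .one (Complex.zero_le_real.mpr ?_)) (.smul hM (by positivity))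
  have : t * (N + 1) = 1 := inv_mul_cancel₀ (by positivity)
  nlinarith

theorem Matrix.exists_contraction_mul_mul_eq_smul_one {n : Type*} [Fintype n] [DecidableEq n]
    (hn : 4 ≤ Fintype.card n) {E₀ E₁ : Matrix n n ℂ}
    (hker : ker (toLin' E₀) ⊓ ker (toLin' E₁) = ⊥) :
    ∃ (A : Matrix (Fin 2) n ℂ) (V : Matrix n (Fin 2) ℂ) (a b : ℂ), (a ≠ 0 ∨ b ≠ 0) ∧
      (1 - Aᴴ * A).PosSemidef ∧ (1 - Vᴴ * V).PosSemidef ∧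
      A * E₀ * V = a • 1 ∧ A * E₁ * V = b • 1 := by
  obtain ⟨A, V, a, b, hab, h₀, h₁⟩ := exists_mul_mul_eq_smul_one hn hker
  obtain ⟨r, hr, hA⟩ := exists_pos_smul_contraction A
  obtain ⟨s, hs, hV⟩ := exists_pos_smul_contraction V
  have hrs : (r * s : ℂ) ≠ 0 := by exact_mod_cast (mul_pos hr hs).ne'
  refine ⟨(r : ℂ) • A, (s : ℂ) • V, r * s * a, r * s * b, ?_, hA, hV, ?_, ?_⟩
  · simpa [hrs] using hab
  · rw [Matrix.mul_smul, Matrix.smul_mul, Matrix.smul_mul, h₀, smul_smul, smul_smul,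
      mul_comm (s : ℂ)]
  · rw [Matrix.mul_smul, Matrix.smul_mul, Matrix.smul_mul, h₁, smul_smul, smul_smul,
      mul_comm (s : ℂ)]

theorem isSubchannel_conj {m n : Type} [Fintype n] [DecidableEq n] [Fintype m]
    (K : Matrix m n ℂ) (hK : (1 - Kᴴ * K).PosSemidef) :
    IsSubchannel fun X : Matrix n n ℂ => K * X * Kᴴ :=
  ⟨1, fun _ => K, fun X => by simp, by simpa using hK⟩

theorem Matrix.smul_one_mul_mul_conjTranspose {n : Type*} [Fintype n] [DecidableEq n] (c : ℂ)
    (X : Matrix n n ℂ) : (c • 1 : Matrix n n ℂ) * X * (c • 1)ᴴ = (Complex.normSq c : ℂ) • X := by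
  rw [conjTranspose_smul, conjTranspose_one, Matrix.smul_mul, Matrix.one_mul, Matrix.mul_smul,
    Matrix.mul_one, smul_smul, Complex.star_def, mul_comm, Complex.mul_conj]

/-- Proposition 7: every channel on `M_4` with (at most) two Kraus operators is
probabilistically correctable for `ℂ²`. -/
theorem stmt_19 (E0 E1 : Mat 4) (h : E0ᴴ * E0 + E1ᴴ * E1 = 1)
    (E : Mat 4 → Mat 4) (hE : ∀ X, E X = E0 * X * E0ᴴ + E1 * X * E1ᴴ) :
    ∃ (S : Mat 2 → Mat 4) (R : Mat 4 → Mat 2) (p : ℝ),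
      IsSubchannel S ∧ IsSubchannel R ∧ 0 < p ∧
      ∀ X : Mat 2, R (E (S X)) = (p : ℂ) • X := by
  obtain ⟨A, V, a, b, hab, hA, hV, h₀, h₁⟩ :=
    exists_contraction_mul_mul_eq_smul_one (by simp) (ker_toLin'_inf_ker_toLin'_eq_bot h)
  have hp : 0 < Complex.normSq a + Complex.normSq b := by
    rcases hab with ha | hb
    · linarith [Complex.normSq_pos.2 ha, Complex.normSq_nonneg b]
    · linarith [Complex.normSq_pos.2 hb, Complex.normSq_nonneg a]
  refine ⟨fun X => V * X * Vᴴ, fun Y => A * Y * Aᴴ, _, isSubchannel_conj V hV,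
    isSubchannel_conj A hA, hp, fun X => ?_⟩
  calc A * E (V * X * Vᴴ) * Aᴴ
      = A * E0 * V * X * (A * E0 * V)ᴴ + A * E1 * V * X * (A * E1 * V)ᴴ := by
        simp only [hE, conjTranspose_mul, Matrix.mul_add, Matrix.add_mul, Matrix.mul_assoc]
    _ = _ := by
        rw [h₀, h₁, smul_one_mul_mul_conjTranspose, smul_one_mul_mul_conjTranspose, ← add_smul,
          Complex.ofReal_add]
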